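/- Let d ≥ 1, 0 < s < 1 and 1 ≤ p < ∞. There exists a constant C = C(d,s,p) > 0 such that for every A ∈ C¹(closure(ℝ^{d+1}_+), ℝ^{d+1}) and every U ∈ C¹_c(closure(ℝ^{d+1}_+), ℂ), ‖U(·,0)‖^p_{L^p(ℝ^d)} ≤ C ( ∬_{ℝ^{d+1}_+} |∇_A U(z,t)|^p / t^{1−(1−s)p} dz dt )^{1−s} · ( ∬_{ℝ^{d+1}_+} |U(z,t)|^p / t^{1−(1−s)p} dz dt )^{s}. -/

import Mathlib

open MeasureTheory Filter
open scoped BigOperators Topology ENNReal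

noncomputable section

abbrev Euc (n : ℕ) : Type := EuclideanSpace ℝ (Fin n)

def emb {d : ℕ} (x : Euc d) (t : ℝ) : Euc (d + 1) :=
  (WithLp.equiv 2 (Fin (d + 1) → ℝ)).symm (Fin.snoc (fun j => x j) t)

def halfSpace (d : ℕ) : Set (Euc (d + 1)) := {P | 0 < P (Fin.last d)}

def closedHalfSpace (d : ℕ) : Set (Euc (d + 1)) := {P | 0 ≤ P (Fin.last d)}

def Ipot {n : ℕ} (a : Euc n → Euc n) (x y : Euc n) : ℝ :=
  ∫ t in (0:ℝ)..1, (inner ℝ (a ((1 - t) • x + t • y)) (y - x) : ℝ)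

def gagP (d : ℕ) (s p : ℝ) (a : Euc d → Euc d) (u : Euc d → ℂ) : ℝ :=
  ∫ x : Euc d, ∫ y : Euc d,
    ‖Complex.exp (Complex.I * (Ipot a x y : ℂ)) * u y - u x‖ ^ p
      / ‖y - x‖ ^ ((d : ℝ) + s * p)

def covGrad {n : ℕ} (A : Euc n → Euc n) (U : Euc n → ℂ) (z : Euc n) :
    EuclideanSpace ℂ (Fin n) :=
  (WithLp.equiv 2 (Fin n → ℂ)).symm
    (fun j => fderiv ℝ U z (EuclideanSpace.single j 1) + Complex.I * (A z j : ℂ) * U z)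

def extDer {n : ℕ} (A : Euc n → Euc n) (P v w : Euc n) : ℝ :=
  (inner ℝ (fderiv ℝ A P v) w : ℝ) - (inner ℝ (fderiv ℝ A P w) v : ℝ)

def Apar {d : ℕ} (A : Euc (d + 1) → Euc (d + 1)) : Euc d → Euc d := fun x =>
  (WithLp.equiv 2 (Fin d → ℝ)).symm (fun j => A (emb x 0) (Fin.castSucc j))

/-- Area of the parallelogram spanned by `a` and `b`, i.e. the norm of `a ∧ b`. -/
def wedgeNorm {n : ℕ} (a b : Euc n) : ℝ :=
  Real.sqrt (‖a‖ ^ 2 * ‖b‖ ^ 2 - (inner ℝ a b : ℝ) ^ 2)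

/-- Norm of a bilinear form: the supremum of `|B v w|` over unit-balls. -/
def form2Norm {n : ℕ} (B : Euc n → Euc n → ℝ) : ℝ :=
  sSup ((fun vw : Euc n × Euc n => |B vw.1 vw.2|) '' {vw | ‖vw.1‖ ≤ 1 ∧ ‖vw.2‖ ≤ 1})

/-- `G` is the weak covariant gradient `∇_A U = ∇U + iAU` of `U` on the set `S`. -/
def IsWeakCovGrad {n : ℕ} (S : Set (Euc n)) (A : Euc n → Euc n)
    (U : Euc n → ℂ) (G : Euc n → EuclideanSpace ℂ (Fin n)) : Prop :=
  ∀ φ : Euc n → ℂ, ContDiff ℝ (⊤ : ℕ∞) φ → HasCompactSupport φ → tsupport φ ⊆ S →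
    ∀ j : Fin n,
      ∫ z in S, U z * fderiv ℝ φ z (EuclideanSpace.single j 1)
        = ∫ z in S, (Complex.I * ((A z j : ℝ) : ℂ) * U z - G z j) * φ z

/-- Membership in the magnetic Sobolev space `W^{1,p}_A(S)`. -/
def MemW1pA {n : ℕ} (S : Set (Euc n)) (p : ℝ) (A : Euc n → Euc n) (U : Euc n → ℂ) : Prop :=
  LocallyIntegrableOn U S ∧
  ∃ G : Euc n → EuclideanSpace ℂ (Fin n),
    IsWeakCovGrad S A U G ∧
    IntegrableOn (fun z => ‖U z‖ ^ p + ‖G z‖ ^ p) S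

/-- Membership in the fractional magnetic Sobolev space `W^{s,p}_a(ℝ^d)`. -/
def MemWsp (d : ℕ) (s p : ℝ) (a : Euc d → Euc d) (u : Euc d → ℂ) : Prop :=
  MemLp u (ENNReal.ofReal p) volume ∧
  Integrable (fun q : Euc d × Euc d =>
    ‖Complex.exp (Complex.I * (Ipot a q.1 q.2 : ℂ)) * u q.2 - u q.1‖ ^ p
      / ‖q.2 - q.1‖ ^ ((d : ℝ) + s * p))

/-- Membership in the weighted magnetic Sobolev space `W^{1,p}_{A,γ}(ℝ^{d+1}_+)`
(weight `t^γ`). -/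
def MemW1pAgamma (d : ℕ) (p γ : ℝ) (A : Euc (d + 1) → Euc (d + 1))
    (U : Euc (d + 1) → ℂ) : Prop :=
  LocallyIntegrableOn U (halfSpace d) ∧
  ∃ G : Euc (d + 1) → EuclideanSpace ℂ (Fin (d + 1)),
    IsWeakCovGrad (halfSpace d) A U G ∧
    IntegrableOn (fun P => (‖U P‖ ^ p + ‖G P‖ ^ p) * (P (Fin.last d)) ^ γ) (halfSpace d)

/-- `u` is the trace on `{t = 0}` of `U ∈ W^{1,p}_A(ℝ^{d+1}_+)` (with weak covariant
gradient `G`): some sequence of `C¹_c` functions converges to `U` in `W^{1,p}_A` and to `u`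
in `L^p` of the boundary. -/
def IsTrace (d : ℕ) (p : ℝ) (A : Euc (d + 1) → Euc (d + 1)) (U : Euc (d + 1) → ℂ)
    (G : Euc (d + 1) → EuclideanSpace ℂ (Fin (d + 1))) (u : Euc d → ℂ) : Prop :=
  ∃ V : ℕ → Euc (d + 1) → ℂ,
    (∀ n, ContDiff ℝ 1 (V n) ∧ HasCompactSupport (V n)) ∧
    Tendsto (fun n => ∫ z in halfSpace d, (‖U z - V n z‖ ^ p + ‖G z - covGrad A (V n) z‖ ^ p))
      atTop (𝓝 0) ∧
    Tendsto (fun n => ∫ x : Euc d, ‖u x - V n (emb x 0)‖ ^ p) atTop (𝓝 0)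

/-- Projection on the first `d` coordinates. -/
def par {d : ℕ} (P : Euc (d + 1)) : Euc d :=
  (WithLp.equiv 2 (Fin d → ℝ)).symm (fun j => P (Fin.castSucc j))

/-- Pull-back `ψ*A (x) = Dψ(x)* A(ψ(x))` of the 1-form `A` by `ψ`. -/
def pullback {d : ℕ} (ψ : Euc d → Euc (d + 1)) (A : Euc (d + 1) → Euc (d + 1)) :
    Euc d → Euc d := fun x =>
  (WithLp.equiv 2 (Fin d → ℝ)).symm
    (fun j => (inner ℝ (fderiv ℝ ψ x (EuclideanSpace.single j 1)) (A (ψ x)) : ℝ))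

/-- The (complexified) adjoint `Dψ(x)*` applied to a vector `G ∈ ℂ^{d+1}`. -/
def pullCov {d : ℕ} (ψ : Euc d → Euc (d + 1)) (x : Euc d)
    (G : EuclideanSpace ℂ (Fin (d + 1))) : EuclideanSpace ℂ (Fin d) :=
  (WithLp.equiv 2 (Fin d → ℂ)).symm
    (fun j => ∑ i, ((fderiv ℝ ψ x (EuclideanSpace.single j 1) i : ℝ) : ℂ) * G i)

/-- The potential `I^μ_A(x,y) = ∫_0^1 A((1−t)x+ty)⬝(y−x) dμ(t)`. -/
def IpotMu {n : ℕ} (μ : Measure ℝ) (a : Euc n → Euc n) (x y : Euc n) : ℝ :=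
  ∫ t, (inner ℝ (a ((1 - t) • x + t • y)) (y - x) : ℝ) ∂μ

/-- The `p`-th power of the seminorm `‖u‖_{Ẇ^{s,p}_{A,μ}(ℝ^d)}`. -/
def gagPMu (d : ℕ) (s p : ℝ) (μ : Measure ℝ) (a : Euc d → Euc d) (u : Euc d → ℂ) : ℝ :=
  ∫ x : Euc d, ∫ y : Euc d,
    ‖Complex.exp (Complex.I * (IpotMu μ a x y : ℂ)) * u y - u x‖ ^ p
      / ‖y - x‖ ^ ((d : ℝ) + s * p)



namespace S5


lemma emb_apply_castSucc {d : ℕ} (x : Euc d) (t : ℝ) (j : Fin d) :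
    emb x t (Fin.castSucc j) = x j := by
  simp [emb, WithLp.equiv_symm_apply, PiLp.toLp_apply, Fin.snoc_castSucc]

lemma emb_apply_last {d : ℕ} (x : Euc d) (t : ℝ) : emb x t (Fin.last d) = t := by
  simp [emb, WithLp.equiv_symm_apply, PiLp.toLp_apply, Fin.snoc_last]

lemma emb_affine {d : ℕ} (x : Euc d) (t : ℝ) :
    emb x t = t • EuclideanSpace.single (Fin.last d) 1 + emb x 0 := by
  ext i
  refine Fin.lastCases ?_ (fun j => ?_) i
  · simp [emb_apply_last, EuclideanSpace.single_apply]
  · simp [emb_apply_castSucc, EuclideanSpace.single_apply, (Fin.castSucc_lt_last j).ne]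

lemma abs_le_norm_emb {d : ℕ} (x : Euc d) (t : ℝ) : |t| ≤ ‖emb x t‖ := by
  rw [EuclideanSpace.norm_eq]
  have h : |t| = Real.sqrt (‖emb x t (Fin.last d)‖ ^ 2) := by
    rw [emb_apply_last]; simp [Real.sqrt_sq_eq_abs]
  rw [h]
  apply Real.sqrt_le_sqrt
  exact Finset.single_le_sum (f := fun i => ‖emb x t i‖ ^ 2) (fun i _ => sq_nonneg _)
    (Finset.mem_univ _)

lemma norm_le_norm_emb {d : ℕ} (x : Euc d) (t : ℝ) : ‖x‖ ≤ ‖emb x t‖ := by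
  rw [EuclideanSpace.norm_eq, EuclideanSpace.norm_eq]
  apply Real.sqrt_le_sqrt
  rw [Fin.sum_univ_castSucc]
  have h : ∀ j : Fin d, ‖x j‖ ^ 2 = ‖emb x t (Fin.castSucc j)‖ ^ 2 := by
    intro j; rw [emb_apply_castSucc]
  rw [Finset.sum_congr rfl (fun j _ => h j)]
  exact le_add_of_nonneg_right (sq_nonneg _)

lemma continuous_emb {d : ℕ} : Continuous fun q : Euc d × ℝ => emb q.1 q.2 := by
  refine Continuous.comp (PiLp.continuous_toLp 2 (fun _ : Fin (d+1) => ℝ))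
    (continuous_pi fun i => ?_)
  refine Fin.lastCases ?_ (fun j => ?_) i
  · simpa [Fin.snoc_last] using continuous_snd
  · simp only [Fin.snoc_castSucc]
    exact (continuous_apply j).comp ((PiLp.continuous_ofLp 2 (fun _ : Fin d => ℝ)).comp continuous_fst)

lemma coord_le_norm {n : ℕ} (v : EuclideanSpace ℂ (Fin n)) (i : Fin n) : ‖v i‖ ≤ ‖v‖ := by
  rw [EuclideanSpace.norm_eq]
  have h : ‖v i‖ = Real.sqrt (‖v i‖ ^ 2) := by rw [Real.sqrt_sq (norm_nonneg _)]
  rw [h]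
  apply Real.sqrt_le_sqrt
  exact Finset.single_le_sum (f := fun j => ‖v j‖ ^ 2) (fun j _ => sq_nonneg _) (Finset.mem_univ i)

lemma covGrad_apply {n : ℕ} (A : Euc n → Euc n) (U : Euc n → ℂ) (z : Euc n) (j : Fin n) :
    covGrad A U z j = fderiv ℝ U z (EuclideanSpace.single j 1) + Complex.I * (A z j : ℂ) * U z := rfl

lemma covGrad_continuous {n : ℕ} {A : Euc n → Euc n} (hA : ContDiff ℝ 1 A) {U : Euc n → ℂ}
    (hU : ContDiff ℝ 1 U) : Continuous (covGrad A U) := by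
  refine Continuous.comp (PiLp.continuous_toLp 2 (fun _ : Fin n => ℂ))
    (continuous_pi fun j => ?_)
  refine Continuous.add ?_ ?_
  · exact (hU.continuous_fderiv_apply one_ne_zero).comp (continuous_id.prodMk continuous_const)
  · refine (continuous_const.mul (Complex.continuous_ofReal.comp ?_)).mul hU.continuous
    exact (continuous_apply j).comp ((PiLp.continuous_ofLp 2 (fun _ : Fin n => ℝ)).comp hA.continuous)

lemma covGrad_eq_zero {n : ℕ} (A : Euc n → Euc n) (U : Euc n → ℂ) {z : Euc n}
    (hz : z ∉ tsupport U) : covGrad A U z = 0 := by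
  have h1 : fderiv ℝ U z = 0 := by
    by_contra h
    exact hz (support_fderiv_subset ℝ (by simpa [Function.mem_support] using h))
  have h2 : U z = 0 := image_eq_zero_of_notMem_tsupport hz
  ext i
  simp [covGrad, WithLp.equiv_symm_apply, PiLp.toLp_apply, h1, h2]

lemma add_rpow_le {a b p : ℝ} (ha : 0 ≤ a) (hb : 0 ≤ b) (hp : 0 ≤ p) :
    (a + b) ^ p ≤ 2 ^ p * (a ^ p + b ^ p) := by
  have h1 : a + b ≤ 2 * max a b := by
    rcases le_total a b with h | h
    · simp [max_eq_right h]; linarith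
    · simp [max_eq_left h]; linarith
  calc (a + b) ^ p ≤ (2 * max a b) ^ p :=
        Real.rpow_le_rpow (by positivity) h1 hp
    _ = 2 ^ p * (max a b) ^ p := Real.mul_rpow (by norm_num) (le_max_of_le_left ha)
    _ ≤ 2 ^ p * (a ^ p + b ^ p) := by
        refine mul_le_mul_of_nonneg_left ?_ (Real.rpow_nonneg (by norm_num) _)
        rcases le_total a b with h | h
        · rw [max_eq_right h]; exact le_add_of_nonneg_left (Real.rpow_nonneg ha _)
        · rw [max_eq_left h]; exact le_add_of_nonneg_right (Real.rpow_nonneg hb _)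


lemma norm_exp_I_mul_real (r : ℝ) : ‖Complex.exp (Complex.I * (r : ℂ))‖ = 1 := by
  rw [Complex.norm_exp]
  simp [Complex.mul_re]

lemma key1 {d : ℕ} {A : Euc (d+1) → Euc (d+1)} (hA : ContDiff ℝ 1 A)
    {U : Euc (d+1) → ℂ} (hU : ContDiff ℝ 1 U) (x : Euc d) {τ : ℝ} (hτ : 0 ≤ τ) :
    ‖U (emb x 0)‖ ≤ ‖U (emb x τ)‖ + ∫ t in (0:ℝ)..τ, ‖covGrad A U (emb x t)‖ := by
  set e : Euc (d+1) := EuclideanSpace.single (Fin.last d) 1 with he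
  have hembder : ∀ t : ℝ, HasDerivAt (fun r : ℝ => emb x r) e t := by
    intro t
    have h1 : (fun r : ℝ => emb x r) = fun r : ℝ => r • e + emb x 0 :=
      funext fun r => emb_affine x r
    rw [h1]
    simpa using ((hasDerivAt_id t).smul_const e).add_const (emb x 0)
  have hembc : Continuous fun t : ℝ => emb x t :=
    continuous_emb.comp (Continuous.prodMk_right x)
  have hUder : ∀ t : ℝ, HasDerivAt (fun r : ℝ => U (emb x r)) (fderiv ℝ U (emb x t) e) t :=
    fun t => ((hU.differentiable one_ne_zero (emb x t)).hasFDerivAt).comp_hasDerivAt t (hembder t)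
  set a : ℝ → ℝ := fun t => A (emb x t) (Fin.last d) with ha
  have hac : Continuous a := by
    exact (continuous_apply (Fin.last d)).comp
      ((PiLp.continuous_ofLp 2 (fun _ : Fin (d+1) => ℝ)).comp (hA.continuous.comp hembc))
  set φ : ℝ → ℝ := fun t => ∫ r in (0:ℝ)..t, a r with hφ
  have hφder : ∀ t : ℝ, HasDerivAt φ (a t) t := fun t =>
    intervalIntegral.integral_hasDerivAt_right (hac.intervalIntegrable 0 t)
      (hac.stronglyMeasurableAtFilter volume (𝓝 t)) hac.continuousAt
  have hφc : Continuous φ := by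
    refine continuous_iff_continuousAt.2 fun t => (hφder t).continuousAt
  set V : ℝ → ℂ := fun t => Complex.exp (Complex.I * (φ t : ℂ)) * U (emb x t) with hV
  set V' : ℝ → ℂ := fun t => Complex.exp (Complex.I * (φ t : ℂ)) *
      (fderiv ℝ U (emb x t) e + Complex.I * (a t : ℂ) * U (emb x t)) with hV'
  have hVder : ∀ t : ℝ, HasDerivAt V (V' t) t := by
    intro t
    have h1 : HasDerivAt (fun r : ℝ => Complex.I * (φ r : ℂ)) (Complex.I * (a t : ℂ)) t :=
      ((hφder t).ofReal_comp).const_mul Complex.I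
    have h2 : HasDerivAt (fun r : ℝ => Complex.exp (Complex.I * (φ r : ℂ)))
        (Complex.exp (Complex.I * (φ t : ℂ)) * (Complex.I * (a t : ℂ))) t := by
      simpa [mul_comm] using h1.cexp
    have h3 := h2.mul (hUder t)
    refine h3.congr_deriv ?_
    rw [hV']; ring
  have hV'c : Continuous V' := by
    have h1 : Continuous fun t : ℝ => Complex.exp (Complex.I * (φ t : ℂ)) :=
      Complex.continuous_exp.comp (continuous_const.mul (Complex.continuous_ofReal.comp hφc))
    have h2 : Continuous fun t : ℝ => fderiv ℝ U (emb x t) e :=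
      (hU.continuous_fderiv_apply one_ne_zero).comp (hembc.prodMk continuous_const)
    have h3 : Continuous fun t : ℝ => Complex.I * (a t : ℂ) * U (emb x t) :=
      (continuous_const.mul (Complex.continuous_ofReal.comp hac)).mul (hU.continuous.comp hembc)
    exact h1.mul (h2.add h3)
  have hFTC : ∫ t in (0:ℝ)..τ, V' t = V τ - V 0 :=
    intervalIntegral.integral_eq_sub_of_hasDerivAt (fun t _ => hVder t)
      (hV'c.intervalIntegrable 0 τ)
  have hVnorm : ∀ t : ℝ, ‖V t‖ = ‖U (emb x t)‖ := by
    intro t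
    calc ‖V t‖ = ‖Complex.exp (Complex.I * (φ t : ℂ))‖ * ‖U (emb x t)‖ := norm_mul _ _
      _ = ‖U (emb x t)‖ := by rw [norm_exp_I_mul_real, one_mul]
  have hV'le : ∀ t : ℝ, ‖V' t‖ ≤ ‖covGrad A U (emb x t)‖ := by
    intro t
    rw [hV']
    simp only [norm_mul, norm_exp_I_mul_real, one_mul]
    calc ‖fderiv ℝ U (emb x t) e + Complex.I * (a t : ℂ) * U (emb x t)‖
        = ‖covGrad A U (emb x t) (Fin.last d)‖ := by rw [covGrad_apply]
      _ ≤ ‖covGrad A U (emb x t)‖ := coord_le_norm _ _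
  have hgc : Continuous fun t : ℝ => ‖covGrad A U (emb x t)‖ :=
    ((covGrad_continuous hA hU).comp hembc).norm
  have h5 : ‖V τ - V 0‖ ≤ ∫ t in (0:ℝ)..τ, ‖covGrad A U (emb x t)‖ := by
    rw [← hFTC]
    refine le_trans (intervalIntegral.norm_integral_le_integral_norm hτ) ?_
    exact intervalIntegral.integral_mono_on hτ (hV'c.norm.intervalIntegrable 0 τ)
      (hgc.intervalIntegrable 0 τ) (fun t _ => hV'le t)
  have h6 : ‖V 0‖ ≤ ‖V τ‖ + ‖V τ - V 0‖ := by
    have := norm_sub_le (V τ) (V τ - V 0)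
    simpa using this
  rw [← hVnorm 0, ← hVnorm τ]
  exact le_trans h6 (by linarith)


lemma holder_aux (p α : ℝ) (hp : 1 ≤ p) (hα1 : -1 < α) (hα2 : α < p - 1) :
    ∃ c : ℝ, 0 < c ∧ ∀ g : ℝ → ℝ, Continuous g → (∀ t, 0 ≤ g t) → ∀ T : ℝ, 0 < T →
      IntegrableOn (fun t => g t ^ p * t ^ α) (Set.Ioc 0 T) volume →
      (∫ t in Set.Ioc (0:ℝ) T, g t) ^ p
        ≤ c * T ^ (p - 1 - α) * ∫ t in Set.Ioc (0:ℝ) T, g t ^ p * t ^ α := by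
  have hp0 : 0 < p := lt_of_lt_of_le one_pos hp
  rcases eq_or_lt_of_le hp with hp1 | hp1
  · -- p = 1
    refine ⟨1, one_pos, fun g hg hgnn T hT hint => ?_⟩
    have hmono : (∫ t in Set.Ioc (0:ℝ) T, g t)
        ≤ ∫ t in Set.Ioc (0:ℝ) T, (g t ^ p * t ^ α) * T ^ (-α) := by
      refine setIntegral_mono_on (hg.integrableOn_Ioc) (hint.mul_const _)
        measurableSet_Ioc (fun t ht => ?_)
      have ht0 : 0 < t := ht.1
      have h1 : (1:ℝ) = t ^ α * t ^ (-α) := by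
        rw [← Real.rpow_add ht0]; simp
      have h2 : t ^ (-α) ≤ T ^ (-α) := Real.rpow_le_rpow ht0.le ht.2 (by linarith)
      calc g t = g t ^ p * (t ^ α * t ^ (-α)) := by rw [← h1, ← hp1, Real.rpow_one, mul_one]
        _ ≤ g t ^ p * (t ^ α * T ^ (-α)) := by
            refine mul_le_mul_of_nonneg_left (mul_le_mul_of_nonneg_left h2
              (Real.rpow_nonneg ht0.le _)) (Real.rpow_nonneg (hgnn t) _)
        _ = (g t ^ p * t ^ α) * T ^ (-α) := by ring
    rw [integral_mul_const] at hmono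
    have hE : p - 1 - α = -α := by rw [← hp1]; ring
    calc (∫ t in Set.Ioc (0:ℝ) T, g t) ^ p = ∫ t in Set.Ioc (0:ℝ) T, g t := by
          rw [← hp1, Real.rpow_one]
      _ ≤ (∫ t in Set.Ioc (0:ℝ) T, g t ^ p * t ^ α) * T ^ (-α) := hmono
      _ = 1 * T ^ (p - 1 - α) * ∫ t in Set.Ioc (0:ℝ) T, g t ^ p * t ^ α := by
          rw [hE]; ring
  · -- p > 1
    set q : ℝ := p / (p - 1) with hq
    have hp1' : 0 < p - 1 := by linarith
    have hpq : p.HolderConjugate q := (Real.holderConjugate_iff_eq_conjExponent hp1).2 hq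
    set β : ℝ := -(α / (p - 1)) with hβ
    have hβ1 : (-1:ℝ) < β := by
      have h1 : α / (p-1) < 1 := (div_lt_one hp1').2 (by linarith)
      rw [hβ]; linarith
    have hβ0 : (0:ℝ) < β + 1 := by linarith
    refine ⟨(1/(β+1)) ^ (p-1), Real.rpow_pos_of_pos (by positivity) _,
      fun g hg hgnn T hT hint => ?_⟩
    set μ := volume.restrict (Set.Ioc (0:ℝ) T) with hμ
    set f : ℝ → ℝ := fun t => g t * t ^ (α / p) with hf
    set h : ℝ → ℝ := fun t => t ^ (-(α / p)) with hh
    have haemem : ∀ᵐ t ∂μ, t ∈ Set.Ioc (0:ℝ) T := ae_restrict_mem measurableSet_Ioc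
    have hfnn : 0 ≤ᵐ[μ] f := by
      filter_upwards [haemem] with t ht
      exact mul_nonneg (hgnn t) (Real.rpow_nonneg ht.1.le _)
    have hhnn : 0 ≤ᵐ[μ] h := by
      filter_upwards [haemem] with t ht
      exact Real.rpow_nonneg ht.1.le _
    have hrpowc : ∀ r : ℝ, ContinuousOn (fun t : ℝ => t ^ r) (Set.Ioc (0:ℝ) T) := by
      intro r t ht
      exact (Real.continuousAt_rpow_const t r (Or.inl (ne_of_gt ht.1))).continuousWithinAt
    have hfm : AEStronglyMeasurable f μ :=
      (hg.continuousOn.mul (hrpowc (α/p))).aestronglyMeasurable measurableSet_Ioc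
    have hhm : AEStronglyMeasurable h μ :=
      (hrpowc (-(α/p))).aestronglyMeasurable measurableSet_Ioc
    have hfpae : (fun t => f t ^ p) =ᵐ[μ] fun t => g t ^ p * t ^ α := by
      filter_upwards [haemem] with t ht
      have ht0 : (0:ℝ) < t := ht.1
      show (g t * t ^ (α/p)) ^ p = g t ^ p * t ^ α
      rw [Real.mul_rpow (hgnn t) (Real.rpow_nonneg ht0.le _), ← Real.rpow_mul ht0.le,
        div_mul_cancel₀ _ (ne_of_gt hp0)]
    have hcongr1 : (fun t => ‖f t‖ ^ p) =ᵐ[μ] fun t => g t ^ p * t ^ α := by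
      filter_upwards [hfpae, hfnn] with t h1 h2
      rw [Real.norm_of_nonneg h2]; exact h1
    have hip : Integrable (fun t => ‖f t‖ ^ p) μ := hint.congr hcongr1.symm
    have hp0' : ENNReal.ofReal p ≠ 0 := by
      simp only [ne_eq, ENNReal.ofReal_eq_zero, not_le]; exact hp0
    have hfmem : MemLp f (ENNReal.ofReal p) μ := by
      refine (memLp_norm_rpow_iff hfm hp0' ENNReal.ofReal_ne_top).1 ?_
      rw [ENNReal.div_self hp0' ENNReal.ofReal_ne_top, ENNReal.toReal_ofReal hp0.le]
      exact (memLp_one_iff_integrable).2 hip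
    have hqE : -(α/p) * q = β := by rw [hq, hβ]; field_simp
    have hhqae : (fun t => h t ^ q) =ᵐ[μ] fun t => t ^ β := by
      filter_upwards [haemem] with t ht
      show (t ^ (-(α/p))) ^ q = t ^ β
      rw [← Real.rpow_mul ht.1.le, hqE]
    have hcongr2 : (fun t => ‖h t‖ ^ q) =ᵐ[μ] fun t => t ^ β := by
      filter_upwards [hhqae, hhnn] with t h1 h2
      rw [Real.norm_of_nonneg h2]; exact h1
    have hβint : Integrable (fun t => t ^ β) μ := by
      have h1 := intervalIntegral.intervalIntegrable_rpow' (a := 0) (b := T) hβ1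
      exact (intervalIntegrable_iff_integrableOn_Ioc_of_le hT.le).1 h1
    have hiq : Integrable (fun t => ‖h t‖ ^ q) μ := hβint.congr hcongr2.symm
    have hq0' : ENNReal.ofReal q ≠ 0 := by
      simp only [ne_eq, ENNReal.ofReal_eq_zero, not_le]; exact hpq.symm.pos
    have hhmem : MemLp h (ENNReal.ofReal q) μ := by
      refine (memLp_norm_rpow_iff hhm hq0' ENNReal.ofReal_ne_top).1 ?_
      rw [ENNReal.div_self hq0' ENNReal.ofReal_ne_top, ENNReal.toReal_ofReal hpq.symm.nonneg]
      exact (memLp_one_iff_integrable).2 hiq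
    have hH := integral_mul_le_Lp_mul_Lq_of_nonneg (μ := μ) hpq hfnn hhnn hfmem hhmem
    have hfh : (fun t => f t * h t) =ᵐ[μ] g := by
      filter_upwards [haemem] with t ht
      show g t * t ^ (α/p) * t ^ (-(α/p)) = g t
      rw [mul_assoc, ← Real.rpow_add ht.1]; simp
    have hL : ∫ t, f t * h t ∂μ = ∫ t in Set.Ioc (0:ℝ) T, g t := integral_congr_ae hfh
    have hR1 : ∫ t, f t ^ p ∂μ = ∫ t in Set.Ioc (0:ℝ) T, g t ^ p * t ^ α :=
      integral_congr_ae hfpae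
    have hR2 : ∫ t, h t ^ q ∂μ = T ^ (β+1) / (β+1) := by
      rw [integral_congr_ae hhqae]
      have h1 := integral_rpow (a := 0) (b := T) (Or.inl hβ1)
      rw [intervalIntegral.integral_of_le hT.le] at h1
      rw [h1, Real.zero_rpow (by linarith : β + 1 ≠ 0)]
      ring
    rw [hL, hR1, hR2] at hH
    set I : ℝ := ∫ t in Set.Ioc (0:ℝ) T, g t ^ p * t ^ α with hI
    have hInn : 0 ≤ I := setIntegral_nonneg measurableSet_Ioc
      (fun t ht => mul_nonneg (Real.rpow_nonneg (hgnn t) _) (Real.rpow_nonneg ht.1.le _))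
    have hJnn : (0:ℝ) ≤ T ^ (β+1) / (β+1) := div_nonneg (Real.rpow_nonneg hT.le _) hβ0.le
    have hgInn : 0 ≤ ∫ t in Set.Ioc (0:ℝ) T, g t :=
      setIntegral_nonneg measurableSet_Ioc fun t _ => hgnn t
    have h2 := Real.rpow_le_rpow hgInn hH hp0.le
    refine le_trans h2 (le_of_eq ?_)
    rw [Real.mul_rpow (Real.rpow_nonneg hInn _) (Real.rpow_nonneg hJnn _),
      ← Real.rpow_mul hInn, ← Real.rpow_mul hJnn]
    have e2 : 1/p * p = 1 := by field_simp
    have e3 : 1/q * p = p - 1 := by rw [hq]; field_simp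
    rw [e2, e3, Real.rpow_one]
    rw [Real.div_rpow (Real.rpow_nonneg hT.le _) hβ0.le, ← Real.rpow_mul hT.le]
    have e4 : (β+1)*(p-1) = p - 1 - α := by rw [hβ]; field_simp; ring
    rw [e4]
    have e5 : ((1:ℝ)/(β+1)) ^ (p-1) = ((β+1) ^ (p-1))⁻¹ := by
      rw [Real.div_rpow (by norm_num) hβ0.le, Real.one_rpow]
      exact one_div _
    rw [e5]
    have h6 : ((β+1):ℝ) ^ (p-1) ≠ 0 := ne_of_gt (Real.rpow_pos_of_pos hβ0 _)
    field_simp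

end S5

set_option maxHeartbeats 1000000 in
/-- Interpolation estimate for the boundary `L^p` norm (Proposition 2.1,
second part):
`‖U(·,0)‖^p_{L^p(ℝ^d)} ≤ C (∬ |∇_A U|^p/t^{1-(1-s)p})^{1-s} (∬ |U|^p/t^{1-(1-s)p})^s`. -/
theorem statement5 (d : ℕ) (hd : 1 ≤ d) (s p : ℝ) (hs0 : 0 < s) (hs1 : s < 1) (hp : 1 ≤ p) :
    ∃ C : ℝ, 0 < C ∧
      ∀ A : Euc (d + 1) → Euc (d + 1), ContDiff ℝ 1 A →
      ∀ U : Euc (d + 1) → ℂ, ContDiff ℝ 1 U → HasCompactSupport U →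
        (∫ x : Euc d, ‖U (emb x 0)‖ ^ p)
          ≤ C * (∫ z : Euc d, ∫ t in Set.Ioi (0:ℝ),
                ‖covGrad A U (emb z t)‖ ^ p / t ^ (1 - (1 - s) * p)) ^ (1 - s)
              * (∫ z : Euc d, ∫ t in Set.Ioi (0:ℝ),
                ‖U (emb z t)‖ ^ p / t ^ (1 - (1 - s) * p)) ^ s := by
  have hp0 : 0 < p := lt_of_lt_of_le one_pos hp
  have hpne : p ≠ 0 := ne_of_gt hp0
  set α : ℝ := (1 - s) * p - 1 with hαdef
  have hsp : 0 < s * p := by nlinarith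
  have h1sp : 0 < (1 - s) * p := by nlinarith
  have hα1 : (-1:ℝ) < α := by rw [hαdef]; nlinarith
  have hα2 : α < p - 1 := by rw [hαdef]; nlinarith
  obtain ⟨c₃, hc₃, hHolder⟩ := S5.holder_aux p α hp hα1 hα2
  set c₂ : ℝ := max 1 ((2:ℝ) ^ (-α)) with hc₂def
  have hc₂ : (0:ℝ) < c₂ := lt_of_lt_of_le one_pos (le_max_left _ _)
  have h2p : (0:ℝ) < 2 ^ p := Real.rpow_pos_of_pos two_pos p
  have h2sp : (0:ℝ) < 2 ^ (s*p) := Real.rpow_pos_of_pos two_pos _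
  set K : ℝ := 2 ^ p * (c₂ + c₃ * 2 ^ (s*p)) with hKdef
  have hK : 0 < K := mul_pos h2p (add_pos hc₂ (mul_pos hc₃ h2sp))
  refine ⟨2*K, by linarith, ?_⟩
  intro A hA U hU hUsupp
  have hUc := hU.continuous
  -- rewrite the right-hand side integrals
  have hdivrw : ∀ v : ℝ → ℝ, (∫ t in Set.Ioi (0:ℝ), v t / t ^ (1 - (1-s)*p))
      = ∫ t in Set.Ioi (0:ℝ), v t * t ^ α := by
    intro v
    refine setIntegral_congr_fun measurableSet_Ioi (fun t ht => ?_)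
    have ht0 : (0:ℝ) < t := ht
    have h1 : t ^ (1 - (1-s)*p) = (t ^ α)⁻¹ := by
      rw [← Real.rpow_neg ht0.le]
      congr 1
      rw [hαdef]; ring
    rw [h1, div_eq_mul_inv, inv_inv]
  have hgoalX : (∫ z : Euc d, ∫ t in Set.Ioi (0:ℝ),
      ‖covGrad A U (emb z t)‖ ^ p / t ^ (1 - (1 - s) * p))
      = ∫ x : Euc d, ∫ t in Set.Ioi (0:ℝ), ‖covGrad A U (emb x t)‖ ^ p * t ^ α := by
    refine integral_congr_ae (Filter.Eventually.of_forall fun z => ?_)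
    exact hdivrw (fun t => ‖covGrad A U (emb z t)‖ ^ p)
  have hgoalY : (∫ z : Euc d, ∫ t in Set.Ioi (0:ℝ),
      ‖U (emb z t)‖ ^ p / t ^ (1 - (1 - s) * p))
      = ∫ x : Euc d, ∫ t in Set.Ioi (0:ℝ), ‖U (emb x t)‖ ^ p * t ^ α := by
    refine integral_congr_ae (Filter.Eventually.of_forall fun z => ?_)
    exact hdivrw (fun t => ‖U (emb z t)‖ ^ p)
  rw [hgoalX, hgoalY]
  -- support radius
  obtain ⟨R0, hR0⟩ := hUsupp.isBounded.subset_closedBall (0 : Euc (d+1))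
  set R : ℝ := max R0 1 with hRdef
  have hR : (0:ℝ) < R := lt_of_lt_of_le one_pos (le_max_right _ _)
  have hRsupp : tsupport U ⊆ Metric.closedBall 0 R :=
    subset_trans hR0 (Metric.closedBall_subset_closedBall (le_max_left _ _))
  have hU0 : ∀ z : Euc (d+1), R < ‖z‖ → U z = 0 := by
    intro z hz
    refine image_eq_zero_of_notMem_tsupport (fun h => ?_)
    have h2 := hRsupp h
    rw [Metric.mem_closedBall, dist_zero_right] at h2
    linarith
  have hG0 : ∀ z : Euc (d+1), R < ‖z‖ → covGrad A U z = 0 := by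
    intro z hz
    refine S5.covGrad_eq_zero A U (fun h => ?_)
    have h2 := hRsupp h
    rw [Metric.mem_closedBall, dist_zero_right] at h2
    linarith
  -- uniform bound
  obtain ⟨M₁, hM₁⟩ := hUsupp.exists_bound_of_continuous hUc
  have hGsupp : HasCompactSupport (covGrad A U) := by
    refine HasCompactSupport.intro (isCompact_closedBall (0 : Euc (d+1)) R) ?_
    intro z hz
    rw [Metric.mem_closedBall, dist_zero_right, not_le] at hz
    exact hG0 z hz
  obtain ⟨M₂, hM₂⟩ := hGsupp.exists_bound_of_continuous (S5.covGrad_continuous hA hU)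
  set M : ℝ := max M₁ M₂ with hMdef
  have hMU : ∀ z, ‖U z‖ ≤ M := fun z => le_trans (hM₁ z) (le_max_left _ _)
  have hMG : ∀ z, ‖covGrad A U z‖ ≤ M := fun z => le_trans (hM₂ z) (le_max_right _ _)
  have hM0 : 0 ≤ M := le_trans (norm_nonneg _) (hMU 0)
  -- integrability machinery
  have main_int : ∀ v : Euc (d+1) → ℝ, Continuous v → (∀ z, 0 ≤ v z) → (∀ z, v z ≤ M) →
      (∀ z : Euc (d+1), R < ‖z‖ → v z = 0) →
      (∀ x : Euc d, IntegrableOn (fun t => v (emb x t) ^ p * t ^ α) (Set.Ioi (0:ℝ)) volume) ∧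
      Integrable (fun x : Euc d => ∫ t in Set.Ioi (0:ℝ), v (emb x t) ^ p * t ^ α) volume := by
    intro v hv hv0 hvM hvR
    have hrint : IntegrableOn (fun t : ℝ => t ^ α) (Set.Ioc (0:ℝ) R) volume :=
      (intervalIntegrable_iff_integrableOn_Ioc_of_le hR.le).1
        (intervalIntegral.intervalIntegrable_rpow' hα1)
    have hvanish_t : ∀ (x : Euc d) (t : ℝ), R < t → v (emb x t) = 0 := by
      intro x t ht
      exact hvR _ (lt_of_lt_of_le (lt_of_lt_of_le ht (le_abs_self t)) (S5.abs_le_norm_emb x t))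
    have hvanish_x : ∀ x : Euc d, R < ‖x‖ → ∀ t : ℝ, v (emb x t) = 0 := by
      intro x hx t
      exact hvR _ (lt_of_lt_of_le hx (S5.norm_le_norm_emb x t))
    have hconOn : ∀ x : Euc d,
        ContinuousOn (fun t : ℝ => v (emb x t) ^ p * t ^ α) (Set.Ioi 0) := by
      intro x
      refine ContinuousOn.mul (Continuous.continuousOn ?_) ?_
      · exact (hv.comp (S5.continuous_emb.comp (Continuous.prodMk_right x))).rpow_const
          (fun t => Or.inr hp0.le)
      · intro t ht
        exact (Real.continuousAt_rpow_const t α (Or.inl (ne_of_gt ht))).continuousWithinAt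
    have hinner : ∀ x : Euc d,
        IntegrableOn (fun t => v (emb x t) ^ p * t ^ α) (Set.Ioi (0:ℝ)) volume := by
      intro x
      have h1 : IntegrableOn (fun t => v (emb x t) ^ p * t ^ α) (Set.Ioc 0 R) volume := by
        refine Integrable.mono' (hrint.const_mul (M ^ p)) ?_ ?_
        · exact ((hconOn x).mono Set.Ioc_subset_Ioi_self).aestronglyMeasurable measurableSet_Ioc
        · filter_upwards [ae_restrict_mem measurableSet_Ioc] with t ht
          have ht0 : (0:ℝ) < t := ht.1
          rw [Real.norm_of_nonneg (mul_nonneg (Real.rpow_nonneg (hv0 _) _)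
            (Real.rpow_nonneg ht0.le _))]
          exact mul_le_mul_of_nonneg_right (Real.rpow_le_rpow (hv0 _) (hvM _) hp0.le)
            (Real.rpow_nonneg ht0.le _)
      have h2 : IntegrableOn (fun t => v (emb x t) ^ p * t ^ α) (Set.Ioi R) volume := by
        refine (integrableOn_zero).congr_fun (fun t ht => ?_) measurableSet_Ioi
        rw [hvanish_t x t ht, Real.zero_rpow hpne, zero_mul]
      have h3 := h1.union h2
      rwa [Set.Ioc_union_Ioi_eq_Ioi hR.le] at h3
    refine ⟨hinner, ?_⟩
    have hprodmeas : (volume : Measure (Euc d)).prod (volume.restrict (Set.Ioi (0:ℝ)))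
        = ((volume : Measure (Euc d)).prod (volume : Measure ℝ)).restrict
            (Set.univ ×ˢ Set.Ioi 0) := by
      rw [← Measure.prod_restrict, Measure.restrict_univ]
    have haemem2 : ∀ᵐ q : Euc d × ℝ ∂((volume : Measure (Euc d)).prod
        (volume.restrict (Set.Ioi (0:ℝ)))), q ∈ Set.univ ×ˢ Set.Ioi (0:ℝ) := by
      rw [hprodmeas]
      exact ae_restrict_mem (MeasurableSet.univ.prod measurableSet_Ioi)
    have hjm : AEStronglyMeasurable (fun q : Euc d × ℝ => v (emb q.1 q.2) ^ p * q.2 ^ α)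
        ((volume : Measure (Euc d)).prod (volume.restrict (Set.Ioi (0:ℝ)))) := by
      rw [hprodmeas]
      refine ContinuousOn.aestronglyMeasurable ?_ (MeasurableSet.univ.prod measurableSet_Ioi)
      refine ContinuousOn.mul (Continuous.continuousOn ?_) ?_
      · exact (hv.comp S5.continuous_emb).rpow_const (fun q => Or.inr hp0.le)
      · intro q hq
        exact ((Real.continuousAt_rpow_const q.2 α (Or.inl (ne_of_gt hq.2))).comp
          continuous_snd.continuousAt).continuousWithinAt
    have hindnn : ∀ q : Euc d × ℝ, 0 ≤
        (Set.indicator (Metric.closedBall (0:Euc d) R) (fun _ => M ^ p) q.1) *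
        (Set.indicator (Set.Ioc (0:ℝ) R) (fun t => t ^ α) q.2) := by
      intro q
      refine mul_nonneg (Set.indicator_nonneg (fun _ _ => Real.rpow_nonneg hM0 _) _)
        (Set.indicator_nonneg (fun t ht => Real.rpow_nonneg ht.1.le _) _)
    have hbound : Integrable (fun q : Euc d × ℝ =>
        (Set.indicator (Metric.closedBall (0:Euc d) R) (fun _ => M ^ p) q.1) *
        (Set.indicator (Set.Ioc (0:ℝ) R) (fun t => t ^ α) q.2))
        ((volume : Measure (Euc d)).prod (volume.restrict (Set.Ioi (0:ℝ)))) := by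
      refine Integrable.mul_prod ?_ ?_
      · refine IntegrableOn.integrable_indicator ?_ measurableSet_closedBall
        exact integrableOn_const measure_closedBall_lt_top.ne
      · exact (hrint.integrable_indicator measurableSet_Ioc).integrableOn
    have hjoint : Integrable (fun q : Euc d × ℝ => v (emb q.1 q.2) ^ p * q.2 ^ α)
        ((volume : Measure (Euc d)).prod (volume.restrict (Set.Ioi (0:ℝ)))) := by
      refine Integrable.mono' hbound hjm ?_
      filter_upwards [haemem2] with q hq
      have hq2 : (0:ℝ) < q.2 := hq.2
      rw [Real.norm_of_nonneg (mul_nonneg (Real.rpow_nonneg (hv0 _) _)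
        (Real.rpow_nonneg hq2.le _))]
      by_cases h1 : ‖q.1‖ ≤ R
      · by_cases h2 : q.2 ≤ R
        · rw [Set.indicator_of_mem (by rw [Metric.mem_closedBall, dist_zero_right]; exact h1),
            Set.indicator_of_mem (Set.mem_Ioc.2 ⟨hq2, h2⟩)]
          exact mul_le_mul (Real.rpow_le_rpow (hv0 _) (hvM _) hp0.le) le_rfl
            (Real.rpow_nonneg hq2.le _) (Real.rpow_nonneg hM0 _)
        · rw [hvanish_t q.1 q.2 (not_le.1 h2), Real.zero_rpow hpne, zero_mul]
          exact hindnn q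
      · rw [hvanish_x q.1 (not_le.1 h1) q.2, Real.zero_rpow hpne, zero_mul]
        exact hindnn q
    exact hjoint.integral_prod_left
  obtain ⟨hYint0, hIYint0⟩ := main_int (fun z => ‖U z‖) hUc.norm (fun z => norm_nonneg _) hMU
    (fun z hz => by show ‖U z‖ = 0; rw [hU0 z hz, norm_zero])
  obtain ⟨hXint0, hIXint0⟩ := main_int (fun z => ‖covGrad A U z‖)
    (S5.covGrad_continuous hA hU).norm (fun z => norm_nonneg _) hMG
    (fun z hz => by show ‖covGrad A U z‖ = 0; rw [hG0 z hz, norm_zero])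
  have hXint : ∀ x : Euc d, IntegrableOn
      (fun t => ‖covGrad A U (emb x t)‖ ^ p * t ^ α) (Set.Ioi (0:ℝ)) volume := hXint0
  have hYint : ∀ x : Euc d, IntegrableOn
      (fun t => ‖U (emb x t)‖ ^ p * t ^ α) (Set.Ioi (0:ℝ)) volume := hYint0
  have hIXint : Integrable (fun x : Euc d =>
      ∫ t in Set.Ioi (0:ℝ), ‖covGrad A U (emb x t)‖ ^ p * t ^ α) volume := hIXint0
  have hIYint : Integrable (fun x : Euc d =>
      ∫ t in Set.Ioi (0:ℝ), ‖U (emb x t)‖ ^ p * t ^ α) volume := hIYint0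
  have hXnn : ∀ x : Euc d,
      0 ≤ ∫ t in Set.Ioi (0:ℝ), ‖covGrad A U (emb x t)‖ ^ p * t ^ α := fun x =>
    setIntegral_nonneg measurableSet_Ioi
      (fun t ht => mul_nonneg (Real.rpow_nonneg (norm_nonneg _) _)
        (Real.rpow_nonneg (le_of_lt ht) _))
  have hYnn : ∀ x : Euc d,
      0 ≤ ∫ t in Set.Ioi (0:ℝ), ‖U (emb x t)‖ ^ p * t ^ α := fun x =>
    setIntegral_nonneg measurableSet_Ioi
      (fun t ht => mul_nonneg (Real.rpow_nonneg (norm_nonneg _) _)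
        (Real.rpow_nonneg (le_of_lt ht) _))
  -- Integrability of the boundary term
  have hFc : Continuous fun x : Euc d => ‖U (emb x 0)‖ ^ p :=
    ((hUc.comp (S5.continuous_emb.comp (continuous_id.prodMk continuous_const))).norm).rpow_const
      (fun x => Or.inr hp0.le)
  have hFsupp : HasCompactSupport fun x : Euc d => ‖U (emb x 0)‖ ^ p := by
    refine HasCompactSupport.intro (isCompact_closedBall (0:Euc d) R) ?_
    intro x hx
    rw [Metric.mem_closedBall, dist_zero_right, not_le] at hx
    rw [hU0 _ (lt_of_lt_of_le hx (S5.norm_le_norm_emb x 0)), norm_zero, Real.zero_rpow hpne]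
  have hFint : Integrable (fun x : Euc d => ‖U (emb x 0)‖ ^ p) volume :=
    hFc.integrable_of_hasCompactSupport hFsupp
  -- key pointwise estimate
  have key : ∀ x : Euc d, ∀ l : ℝ, 0 < l →
      ‖U (emb x 0)‖ ^ p ≤ K * (l ^ (s*p) *
        (∫ t in Set.Ioi (0:ℝ), ‖covGrad A U (emb x t)‖ ^ p * t ^ α)
        + l ^ (-((1-s)*p)) * (∫ t in Set.Ioi (0:ℝ), ‖U (emb x t)‖ ^ p * t ^ α)) := by
    intro x l hl
    have hembx : Continuous fun t : ℝ => emb x t := S5.continuous_emb.comp (Continuous.prodMk_right x)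
    have hgc : Continuous fun t : ℝ => ‖covGrad A U (emb x t)‖ :=
      ((S5.covGrad_continuous hA hU).comp hembx).norm
    have huc : Continuous fun t : ℝ => ‖U (emb x t)‖ := (hUc.comp hembx).norm
    have hupc : Continuous fun t : ℝ => ‖U (emb x t)‖ ^ p :=
      huc.rpow_const (fun t => Or.inr hp0.le)
    have hl2 : (0:ℝ) < 2 * l := by linarith
    have hBnn : 0 ≤ ∫ t in (0:ℝ)..(2*l), ‖covGrad A U (emb x t)‖ :=
      intervalIntegral.integral_nonneg hl2.le (fun t _ => norm_nonneg _)
    have h2 : ∀ τ ∈ Set.Icc l (2*l), ‖U (emb x 0)‖ ^ p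
        ≤ 2 ^ p * (‖U (emb x τ)‖ ^ p
          + (∫ t in (0:ℝ)..(2*l), ‖covGrad A U (emb x t)‖) ^ p) := by
      intro τ hτ
      have h0τ : (0:ℝ) ≤ τ := le_trans hl.le hτ.1
      have h1 : ‖U (emb x 0)‖ ≤ ‖U (emb x τ)‖
          + ∫ t in (0:ℝ)..(2*l), ‖covGrad A U (emb x t)‖ := by
        refine le_trans (S5.key1 hA hU x h0τ) ?_
        have hmono : (∫ t in (0:ℝ)..τ, ‖covGrad A U (emb x t)‖)
            ≤ ∫ t in (0:ℝ)..(2*l), ‖covGrad A U (emb x t)‖ := by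
          rw [← intervalIntegral.integral_add_adjacent_intervals
            (hgc.intervalIntegrable 0 τ) (hgc.intervalIntegrable τ (2*l))]
          have h3 := intervalIntegral.integral_nonneg (μ := volume) hτ.2
            (fun t _ => norm_nonneg (covGrad A U (emb x t)))
          linarith
        linarith
      calc ‖U (emb x 0)‖ ^ p
          ≤ (‖U (emb x τ)‖ + ∫ t in (0:ℝ)..(2*l), ‖covGrad A U (emb x t)‖) ^ p :=
            Real.rpow_le_rpow (norm_nonneg _) h1 hp0.le
        _ ≤ 2 ^ p * (‖U (emb x τ)‖ ^ p
              + (∫ t in (0:ℝ)..(2*l), ‖covGrad A U (emb x t)‖) ^ p) :=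
            S5.add_rpow_le (norm_nonneg _) hBnn hp0.le
    have h3 : l * (‖U (emb x 0)‖ ^ p) ≤ 2 ^ p * ((∫ τ in l..(2*l), ‖U (emb x τ)‖ ^ p)
        + l * ((∫ t in (0:ℝ)..(2*l), ‖covGrad A U (emb x t)‖) ^ p)) := by
      have hle : l ≤ 2*l := by linarith
      have hmono := intervalIntegral.integral_mono_on (μ := volume) hle
        intervalIntegrable_const
        ((continuous_const.mul (hupc.add continuous_const)).intervalIntegrable l (2*l)) h2
      simp only [Pi.mul_apply, Pi.add_apply] at hmono
      rw [intervalIntegral.integral_const, intervalIntegral.integral_const_mul,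
        intervalIntegral.integral_add (hupc.intervalIntegrable _ _) intervalIntegrable_const,
        intervalIntegral.integral_const] at hmono
      have h2l : 2*l - l = l := by ring
      rw [h2l] at hmono
      simpa [smul_eq_mul] using hmono
    have hsub1 : Set.Ioc l (2*l) ⊆ Set.Ioi (0:ℝ) := fun τ hτ => lt_trans hl hτ.1
    have hsub2 : Set.Ioc (0:ℝ) (2*l) ⊆ Set.Ioi (0:ℝ) := fun τ hτ => hτ.1
    have h4 : (∫ τ in l..(2*l), ‖U (emb x τ)‖ ^ p)
        ≤ c₂ * l ^ (-α) * ∫ t in Set.Ioi (0:ℝ), ‖U (emb x t)‖ ^ p * t ^ α := by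
      rw [intervalIntegral.integral_of_le (by linarith : l ≤ 2*l)]
      have hstep : ∀ τ ∈ Set.Ioc l (2*l), ‖U (emb x τ)‖ ^ p
          ≤ (‖U (emb x τ)‖ ^ p * τ ^ α) * (c₂ * l ^ (-α)) := by
        intro τ hτ
        have hτ0 : (0:ℝ) < τ := lt_trans hl hτ.1
        have hδ : τ ^ (-α) ≤ c₂ * l ^ (-α) := by
          rcases le_total 0 α with hc | hc
          · refine le_trans (Real.rpow_le_rpow_of_nonpos hl hτ.1.le (by linarith)) ?_
            exact le_mul_of_one_le_left (Real.rpow_nonneg hl.le _) (le_max_left _ _)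
          · calc τ ^ (-α) ≤ (2*l) ^ (-α) := Real.rpow_le_rpow hτ0.le hτ.2 (by linarith)
              _ = 2 ^ (-α) * l ^ (-α) := Real.mul_rpow (by norm_num) hl.le
              _ ≤ c₂ * l ^ (-α) := mul_le_mul_of_nonneg_right (le_max_right _ _)
                  (Real.rpow_nonneg hl.le _)
        calc ‖U (emb x τ)‖ ^ p = ‖U (emb x τ)‖ ^ p * (τ ^ α * τ ^ (-α)) := by
              rw [← Real.rpow_add hτ0]; simp
          _ ≤ ‖U (emb x τ)‖ ^ p * (τ ^ α * (c₂ * l ^ (-α))) :=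
              mul_le_mul_of_nonneg_left (mul_le_mul_of_nonneg_left hδ
                (Real.rpow_nonneg hτ0.le _)) (Real.rpow_nonneg (norm_nonneg _) _)
          _ = (‖U (emb x τ)‖ ^ p * τ ^ α) * (c₂ * l ^ (-α)) := by ring
      have hmono2 := setIntegral_mono_on (hupc.integrableOn_Ioc)
        (((hYint x).mono_set hsub1).mul_const _) measurableSet_Ioc hstep
      rw [integral_mul_const] at hmono2
      refine le_trans hmono2 ?_
      have h5 : (∫ τ in Set.Ioc l (2*l), ‖U (emb x τ)‖ ^ p * τ ^ α)
          ≤ ∫ t in Set.Ioi (0:ℝ), ‖U (emb x t)‖ ^ p * t ^ α := by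
        refine setIntegral_mono_set (hYint x) ?_ (HasSubset.Subset.eventuallyLE hsub1)
        filter_upwards [ae_restrict_mem measurableSet_Ioi] with t ht
        exact mul_nonneg (Real.rpow_nonneg (norm_nonneg _) _)
          (Real.rpow_nonneg (le_of_lt ht) _)
      calc (∫ τ in Set.Ioc l (2*l), ‖U (emb x τ)‖ ^ p * τ ^ α) * (c₂ * l ^ (-α))
          ≤ (∫ t in Set.Ioi (0:ℝ), ‖U (emb x t)‖ ^ p * t ^ α) * (c₂ * l ^ (-α)) :=
            mul_le_mul_of_nonneg_right h5 (mul_nonneg hc₂.le (Real.rpow_nonneg hl.le _))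
        _ = c₂ * l ^ (-α) * ∫ t in Set.Ioi (0:ℝ), ‖U (emb x t)‖ ^ p * t ^ α := by ring
    have h5 : (∫ t in (0:ℝ)..(2*l), ‖covGrad A U (emb x t)‖) ^ p
        ≤ c₃ * 2 ^ (s*p) * l ^ (s*p)
          * ∫ t in Set.Ioi (0:ℝ), ‖covGrad A U (emb x t)‖ ^ p * t ^ α := by
      have hha := hHolder (fun t => ‖covGrad A U (emb x t)‖) hgc (fun t => norm_nonneg _)
        (2*l) hl2 ((hXint x).mono_set hsub2)
      rw [intervalIntegral.integral_of_le hl2.le]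
      refine le_trans hha ?_
      have he : p - 1 - α = s * p := by rw [hαdef]; ring
      have hIle : (∫ t in Set.Ioc (0:ℝ) (2*l), ‖covGrad A U (emb x t)‖ ^ p * t ^ α)
          ≤ ∫ t in Set.Ioi (0:ℝ), ‖covGrad A U (emb x t)‖ ^ p * t ^ α := by
        refine setIntegral_mono_set (hXint x) ?_ (HasSubset.Subset.eventuallyLE hsub2)
        filter_upwards [ae_restrict_mem measurableSet_Ioi] with t ht
        exact mul_nonneg (Real.rpow_nonneg (norm_nonneg _) _)
          (Real.rpow_nonneg (le_of_lt ht) _)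
      calc c₃ * (2*l) ^ (p - 1 - α)
            * (∫ t in Set.Ioc (0:ℝ) (2*l), ‖covGrad A U (emb x t)‖ ^ p * t ^ α)
          ≤ c₃ * (2*l) ^ (p - 1 - α)
            * ∫ t in Set.Ioi (0:ℝ), ‖covGrad A U (emb x t)‖ ^ p * t ^ α :=
            mul_le_mul_of_nonneg_left hIle (mul_nonneg hc₃.le (Real.rpow_nonneg hl2.le _))
        _ = c₃ * 2 ^ (s*p) * l ^ (s*p)
            * ∫ t in Set.Ioi (0:ℝ), ‖covGrad A U (emb x t)‖ ^ p * t ^ α := by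
            rw [he, Real.mul_rpow (by norm_num : (0:ℝ) ≤ 2) hl.le]; ring
    have hXnnx := hXnn x
    have hYnnx := hYnn x
    have hlspnn : (0:ℝ) ≤ l ^ (s*p) := Real.rpow_nonneg hl.le _
    have hlmnn : (0:ℝ) ≤ l ^ (-((1-s)*p)) := Real.rpow_nonneg hl.le _
    have hida : l ^ (-α) = l * l ^ (-((1-s)*p)) := by
      have hexp : -α = 1 + (-((1-s)*p)) := by rw [hαdef]; ring
      rw [hexp, Real.rpow_add hl, Real.rpow_one]
    have hc₂K : 2 ^ p * c₂ ≤ K := by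
      rw [hKdef]
      nlinarith [mul_pos (mul_pos h2p hc₃) h2sp]
    have hc₃K : 2 ^ p * (c₃ * 2 ^ (s*p)) ≤ K := by
      rw [hKdef]
      nlinarith [mul_pos h2p hc₂]
    have h6 : l * (‖U (emb x 0)‖ ^ p)
        ≤ l * (K * (l ^ (s*p) * (∫ t in Set.Ioi (0:ℝ), ‖covGrad A U (emb x t)‖ ^ p * t ^ α)
          + l ^ (-((1-s)*p)) * (∫ t in Set.Ioi (0:ℝ), ‖U (emb x t)‖ ^ p * t ^ α))) := by
      refine le_trans h3 ?_
      calc 2 ^ p * ((∫ τ in l..(2*l), ‖U (emb x τ)‖ ^ p)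
            + l * ((∫ t in (0:ℝ)..(2*l), ‖covGrad A U (emb x t)‖) ^ p))
          ≤ 2 ^ p * ((c₂ * l ^ (-α) * ∫ t in Set.Ioi (0:ℝ), ‖U (emb x t)‖ ^ p * t ^ α)
            + l * (c₃ * 2 ^ (s*p) * l ^ (s*p)
              * ∫ t in Set.Ioi (0:ℝ), ‖covGrad A U (emb x t)‖ ^ p * t ^ α)) :=
            mul_le_mul_of_nonneg_left (add_le_add h4
              (mul_le_mul_of_nonneg_left h5 hl.le)) h2p.le
        _ = (2 ^ p * c₂) * (l * (l ^ (-((1-s)*p))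
              * (∫ t in Set.Ioi (0:ℝ), ‖U (emb x t)‖ ^ p * t ^ α)))
            + (2 ^ p * (c₃ * 2 ^ (s*p))) * (l * (l ^ (s*p)
              * (∫ t in Set.Ioi (0:ℝ), ‖covGrad A U (emb x t)‖ ^ p * t ^ α))) := by
            rw [hida]; ring
        _ ≤ K * (l * (l ^ (-((1-s)*p))
              * (∫ t in Set.Ioi (0:ℝ), ‖U (emb x t)‖ ^ p * t ^ α)))
            + K * (l * (l ^ (s*p)
              * (∫ t in Set.Ioi (0:ℝ), ‖covGrad A U (emb x t)‖ ^ p * t ^ α))) := by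
            refine add_le_add (mul_le_mul_of_nonneg_right hc₂K ?_)
              (mul_le_mul_of_nonneg_right hc₃K ?_)
            · exact mul_nonneg hl.le (mul_nonneg hlmnn hYnnx)
            · exact mul_nonneg hl.le (mul_nonneg hlspnn hXnnx)
        _ = l * (K * (l ^ (s*p)
              * (∫ t in Set.Ioi (0:ℝ), ‖covGrad A U (emb x t)‖ ^ p * t ^ α)
            + l ^ (-((1-s)*p))
              * (∫ t in Set.Ioi (0:ℝ), ‖U (emb x t)‖ ^ p * t ^ α))) := by ring
    exact le_of_mul_le_mul_left h6 hl
  -- integrate the key estimate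
  have glob : ∀ l : ℝ, 0 < l → (∫ x : Euc d, ‖U (emb x 0)‖ ^ p)
      ≤ K * (l ^ (s*p) * (∫ x : Euc d, ∫ t in Set.Ioi (0:ℝ),
          ‖covGrad A U (emb x t)‖ ^ p * t ^ α)
        + l ^ (-((1-s)*p)) * (∫ x : Euc d, ∫ t in Set.Ioi (0:ℝ),
          ‖U (emb x t)‖ ^ p * t ^ α)) := by
    intro l hl
    have hInt2 : Integrable (fun x : Euc d =>
        K * (l ^ (s*p) * (∫ t in Set.Ioi (0:ℝ), ‖covGrad A U (emb x t)‖ ^ p * t ^ α)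
          + l ^ (-((1-s)*p)) * (∫ t in Set.Ioi (0:ℝ), ‖U (emb x t)‖ ^ p * t ^ α))) volume :=
      ((hIXint.const_mul _).add (hIYint.const_mul _)).const_mul K
    refine le_trans (integral_mono hFint hInt2 (fun x => key x l hl)) (le_of_eq ?_)
    rw [integral_const_mul, integral_add (hIXint.const_mul _) (hIYint.const_mul _),
      integral_const_mul, integral_const_mul]
  have hIXnn : 0 ≤ ∫ x : Euc d, ∫ t in Set.Ioi (0:ℝ),
      ‖covGrad A U (emb x t)‖ ^ p * t ^ α := integral_nonneg hXnn
  have hIYnn : 0 ≤ ∫ x : Euc d, ∫ t in Set.Ioi (0:ℝ),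
      ‖U (emb x t)‖ ^ p * t ^ α := integral_nonneg hYnn
  rcases eq_or_lt_of_le hIXnn with hX0 | hX0
  · -- the gradient term vanishes
    have htend : Filter.Tendsto (fun l : ℝ => K * (l ^ (-((1-s)*p))
        * (∫ x : Euc d, ∫ t in Set.Ioi (0:ℝ), ‖U (emb x t)‖ ^ p * t ^ α)))
        Filter.atTop (𝓝 0) := by
      have h1 := tendsto_rpow_neg_atTop h1sp
      have h2 := (h1.mul_const (∫ x : Euc d, ∫ t in Set.Ioi (0:ℝ),
        ‖U (emb x t)‖ ^ p * t ^ α)).const_mul K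
      simpa using h2
    have hIF0 : (∫ x : Euc d, ‖U (emb x 0)‖ ^ p) ≤ 0 := by
      refine ge_of_tendsto htend ?_
      filter_upwards [Filter.eventually_gt_atTop (0:ℝ)] with l hl
      have h7 := glob l hl
      have h8 : K * (l ^ (s*p) * (∫ x : Euc d, ∫ t in Set.Ioi (0:ℝ),
          ‖covGrad A U (emb x t)‖ ^ p * t ^ α)
          + l ^ (-((1-s)*p)) * (∫ x : Euc d, ∫ t in Set.Ioi (0:ℝ),
          ‖U (emb x t)‖ ^ p * t ^ α))
          = K * (l ^ (-((1-s)*p)) * (∫ x : Euc d, ∫ t in Set.Ioi (0:ℝ),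
          ‖U (emb x t)‖ ^ p * t ^ α)) := by
        rw [← hX0]; ring
      rw [h8] at h7
      exact h7
    rw [← hX0, Real.zero_rpow (by linarith : (1:ℝ) - s ≠ 0)]
    calc (∫ x : Euc d, ‖U (emb x 0)‖ ^ p) ≤ 0 := hIF0
      _ = 2*K * 0 * (∫ x : Euc d, ∫ t in Set.Ioi (0:ℝ),
          ‖U (emb x t)‖ ^ p * t ^ α) ^ s := by ring
  rcases eq_or_lt_of_le hIYnn with hY0 | hY0
  · -- the function term vanishes
    have h1 : Filter.Tendsto (fun l : ℝ => l ^ (s*p)) (𝓝[Set.Ioi (0:ℝ)] 0)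
        (𝓝 ((0:ℝ) ^ (s*p))) :=
      (Real.continuousAt_rpow_const 0 (s*p) (Or.inr hsp.le)).continuousWithinAt
    rw [Real.zero_rpow (ne_of_gt hsp)] at h1
    have htend : Filter.Tendsto (fun l : ℝ => K * (l ^ (s*p)
        * (∫ x : Euc d, ∫ t in Set.Ioi (0:ℝ), ‖covGrad A U (emb x t)‖ ^ p * t ^ α)))
        (𝓝[Set.Ioi (0:ℝ)] 0) (𝓝 0) := by
      have h2 := (h1.mul_const (∫ x : Euc d, ∫ t in Set.Ioi (0:ℝ),
        ‖covGrad A U (emb x t)‖ ^ p * t ^ α)).const_mul K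
      simpa using h2
    have hIF0 : (∫ x : Euc d, ‖U (emb x 0)‖ ^ p) ≤ 0 := by
      refine ge_of_tendsto htend ?_
      filter_upwards [self_mem_nhdsWithin] with l hl
      have h7 := glob l hl
      have h8 : K * (l ^ (s*p) * (∫ x : Euc d, ∫ t in Set.Ioi (0:ℝ),
          ‖covGrad A U (emb x t)‖ ^ p * t ^ α)
          + l ^ (-((1-s)*p)) * (∫ x : Euc d, ∫ t in Set.Ioi (0:ℝ),
          ‖U (emb x t)‖ ^ p * t ^ α))
          = K * (l ^ (s*p) * (∫ x : Euc d, ∫ t in Set.Ioi (0:ℝ),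
          ‖covGrad A U (emb x t)‖ ^ p * t ^ α)) := by
        rw [← hY0]; ring
      rw [h8] at h7
      exact h7
    rw [← hY0, Real.zero_rpow (ne_of_gt hs0), mul_zero]
    exact hIF0
  · -- both integrals positive: optimize in l
    have hdivpos : 0 < (∫ x : Euc d, ∫ t in Set.Ioi (0:ℝ), ‖U (emb x t)‖ ^ p * t ^ α)
        / (∫ x : Euc d, ∫ t in Set.Ioi (0:ℝ), ‖covGrad A U (emb x t)‖ ^ p * t ^ α) :=
      div_pos hY0 hX0
    have hl₀ : 0 < ((∫ x : Euc d, ∫ t in Set.Ioi (0:ℝ), ‖U (emb x t)‖ ^ p * t ^ α)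
        / (∫ x : Euc d, ∫ t in Set.Ioi (0:ℝ), ‖covGrad A U (emb x t)‖ ^ p * t ^ α)) ^ (1/p) :=
      Real.rpow_pos_of_pos hdivpos _
    have hglob := glob _ hl₀
    have emul1 : 1/p * (s*p) = s := by
      rw [mul_comm s p, ← mul_assoc, one_div, inv_mul_cancel₀ hpne, one_mul]
    have emul2 : 1/p * (-((1-s)*p)) = -(1-s) := by
      rw [mul_neg, mul_comm (1-s) p, ← mul_assoc, one_div, inv_mul_cancel₀ hpne, one_mul]
    have e1 : (((∫ x : Euc d, ∫ t in Set.Ioi (0:ℝ), ‖U (emb x t)‖ ^ p * t ^ α)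
        / (∫ x : Euc d, ∫ t in Set.Ioi (0:ℝ), ‖covGrad A U (emb x t)‖ ^ p * t ^ α)) ^ (1/p))
        ^ (s*p)
        = ((∫ x : Euc d, ∫ t in Set.Ioi (0:ℝ), ‖U (emb x t)‖ ^ p * t ^ α)
        / (∫ x : Euc d, ∫ t in Set.Ioi (0:ℝ), ‖covGrad A U (emb x t)‖ ^ p * t ^ α)) ^ s := by
      rw [← Real.rpow_mul hdivpos.le, emul1]
    have e2 : (((∫ x : Euc d, ∫ t in Set.Ioi (0:ℝ), ‖U (emb x t)‖ ^ p * t ^ α)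
        / (∫ x : Euc d, ∫ t in Set.Ioi (0:ℝ), ‖covGrad A U (emb x t)‖ ^ p * t ^ α)) ^ (1/p))
        ^ (-((1-s)*p))
        = ((∫ x : Euc d, ∫ t in Set.Ioi (0:ℝ), ‖U (emb x t)‖ ^ p * t ^ α)
        / (∫ x : Euc d, ∫ t in Set.Ioi (0:ℝ), ‖covGrad A U (emb x t)‖ ^ p * t ^ α))
          ^ (-(1-s)) := by
      rw [← Real.rpow_mul hdivpos.le, emul2]
    rw [e1, e2] at hglob
    refine le_trans hglob (le_of_eq ?_)
    set IX : ℝ := ∫ x : Euc d, ∫ t in Set.Ioi (0:ℝ), ‖covGrad A U (emb x t)‖ ^ p * t ^ α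
      with hIXd
    set IY : ℝ := ∫ x : Euc d, ∫ t in Set.Ioi (0:ℝ), ‖U (emb x t)‖ ^ p * t ^ α with hIYd
    have hX1s := Real.rpow_pos_of_pos hX0 (1-s)
    have hY1s := Real.rpow_pos_of_pos hY0 (1-s)
    have ea : (IY/IX) ^ s * IX = IX ^ (1-s) * IY ^ s := by
      calc (IY/IX) ^ s * IX = (IY ^ s / IX ^ s) * IX := by rw [Real.div_rpow hIYnn hIXnn]
        _ = IY ^ s * (IX / IX ^ s) := by ring
        _ = IY ^ s * IX ^ (1-s) := by
            congr 1
            rw [Real.rpow_sub hX0, Real.rpow_one]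
        _ = IX ^ (1-s) * IY ^ s := mul_comm _ _
    have eb : (IY/IX) ^ (-(1-s)) * IY = IX ^ (1-s) * IY ^ s := by
      have hYs : IY ^ s = IY / IY ^ (1-s) := by
        rw [eq_div_iff (ne_of_gt hY1s), ← Real.rpow_add hY0]
        rw [show s + (1-s) = (1:ℝ) by ring, Real.rpow_one]
      calc (IY/IX) ^ (-(1-s)) * IY = ((IY/IX) ^ (1-s))⁻¹ * IY := by
            rw [Real.rpow_neg (div_nonneg hIYnn hIXnn)]
        _ = (IY ^ (1-s) / IX ^ (1-s))⁻¹ * IY := by rw [Real.div_rpow hIYnn hIXnn]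
        _ = (IX ^ (1-s) / IY ^ (1-s)) * IY := by rw [inv_div]
        _ = IX ^ (1-s) * (IY / IY ^ (1-s)) := by ring
        _ = IX ^ (1-s) * IY ^ s := by rw [← hYs]
    rw [ea, eb]
    ring

end
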